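/- Let φ(x,k) = -[f(x) - f(k - (n-1)x)] with f a polynomial. Define ψ(x,y) = -[f(x) - f(x+y)]; then ψ(x,y) = -y·ψ_reg(x,y) for a polynomial ψ_reg with ψ_reg(x,0) = -f'(x). Consequently, the zero set of φ decomposes as {k = n x} ∪ {ψ_reg(x, k - n x) = 0}, and near a point (x_s, n x_s) with f'(x_s) = 0 and f''(x_s) ≠ 0, the tangent line to the second branch in the (x,k)-plane has slope n - 2, i.e., it is given by k = 2 x_s + (n-2) x. -/

import Mathlib

open Polynomial Finset

noncomputable def psir (f : Polynomial ℝ) (x y : ℝ) : ℝ :=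
  -(∑ m ∈ Finset.range (f.natDegree + 1), f.coeff m *
      ∑ j ∈ Finset.range m, (x + y) ^ j * x ^ (m - 1 - j))

lemma psir_contDiff (f : Polynomial ℝ) : ContDiff ℝ (⊤ : ℕ∞) (Function.uncurry (psir f)) := by
  unfold psir Function.uncurry
  apply ContDiff.neg
  apply ContDiff.sum
  intro m _
  apply ContDiff.mul contDiff_const
  apply ContDiff.sum
  intro j _
  exact ((contDiff_fst.add contDiff_snd).pow j).mul (contDiff_fst.pow _)

lemma psir_key (f : Polynomial ℝ) (x y : ℝ) :
    -(f.eval x - f.eval (x + y)) = -(y * psir f x y) := by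
  rw [neg_sub]
  simp only [psir, Polynomial.eval_eq_sum_range, mul_neg, neg_neg,
    ← Finset.sum_sub_distrib]
  rw [Finset.mul_sum]
  apply Finset.sum_congr rfl
  intro m _
  have hg := geom_sum₂_mul (x + y) x m
  linear_combination (-f.coeff m) * hg

lemma psir_symm (f : Polynomial ℝ) (x y : ℝ) :
    psir f x y = psir f (x + y) (-y) := by
  unfold psir
  congr 1
  apply Finset.sum_congr rfl
  intro m _
  congr 1
  rw [← Finset.sum_range_reflect]
  apply Finset.sum_congr rfl
  intro j hj
  simp only [Finset.mem_range] at hj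
  rw [Nat.sub_sub_self (by omega : j ≤ m - 1)]
  ring_nf

lemma psir_cd_left (f : Polynomial ℝ) (x : ℝ) : ContDiff ℝ (⊤ : ℕ∞) (psir f x) := by
  have := (psir_contDiff f).comp
    ((contDiff_const.prodMk contDiff_id : ContDiff ℝ (⊤ : ℕ∞) fun y : ℝ => (x, y)))
  simpa [Function.uncurry, Function.comp_def] using this

lemma psir_at_zero (f : Polynomial ℝ) (x : ℝ) :
    psir f x 0 = -(f.derivative.eval x) := by
  have hq : Differentiable ℝ (psir f x) := (psir_cd_left f x).differentiable (by simp)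
  have h1 : HasDerivAt (fun y => y * psir f x y)
      (1 * psir f x 0 + 0 * deriv (psir f x) 0) 0 :=
    (hasDerivAt_id 0).mul (hq 0).hasDerivAt
  have h2 : HasDerivAt (fun y => f.eval x - f.eval (x + y)) (-(f.derivative.eval x)) 0 := by
    have hadd : HasDerivAt (fun y : ℝ => x + y) 1 0 := by
      simpa using (hasDerivAt_id' (0:ℝ)).const_add x
    have hf := (f.hasDerivAt (x + 0)).comp 0 hadd
    simpa [Function.comp_def] using (hf.const_sub (f.eval x))
  have heq : (fun y => f.eval x - f.eval (x + y)) = fun y => y * psir f x y := by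
    funext y; exact neg_injective (psir_key f x y)
  rw [heq] at h2
  have := h1.unique h2
  simpa using this


/-- For a polynomial response function, the branch of the critical manifold
crossing the consensus space at a singular point `(x_s, n x_s)` has tangent line
`k = 2 x_s + (n-2) x` in the `(x,k)`-plane. -/
theorem tangent_branches_transversal {n : ℕ} (hn : 2 ≤ n)
    (f : Polynomial ℝ) (hdeg : 2 ≤ f.natDegree)
    (xs : ℝ) (h1 : f.derivative.eval xs = 0)
    (h2 : (f.derivative.derivative).eval xs ≠ 0) :
    ∃ ψreg : ℝ → ℝ → ℝ, ContDiff ℝ (⊤ : ℕ∞) (Function.uncurry ψreg) ∧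
      (∀ x y : ℝ, -(f.eval x - f.eval (x + y)) = -(y * ψreg x y)) ∧
      (∀ x : ℝ, ψreg x 0 = -(f.derivative.eval x)) ∧
      (∀ x k : ℝ, -(f.eval x - f.eval (k - ((n : ℝ) - 1) * x)) = 0 ↔
        k = n * x ∨ ψreg x (k - n * x) = 0) ∧
      -- the line `k = 2 x_s + (n-2) x` is tangent to the branch
      -- `ψreg (x, k - n x) = 0` at `(x_s, n x_s)`:
      HasDerivAt (fun t : ℝ =>
        ψreg (xs + t) ((2 * xs + ((n : ℝ) - 2) * (xs + t)) - n * (xs + t))) 0 0 ∧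
      ∃ d : ℝ, d ≠ 0 ∧ HasDerivAt (fun k : ℝ => ψreg xs (k - n * xs)) d (n * xs) := by
  refine ⟨psir f, psir_contDiff f, psir_key f, psir_at_zero f, ?_, ?_, ?_⟩
  · -- zero-set decomposition
    intro x k
    have e : k - ((n : ℝ) - 1) * x = x + (k - n * x) := by ring
    rw [e, psir_key, neg_eq_zero, mul_eq_zero, sub_eq_zero]
  · -- tangency of the line: the function is even, so derivative at 0 is 0
    have harg : ∀ t : ℝ, (2 * xs + ((n : ℝ) - 2) * (xs + t)) - n * (xs + t) = -2 * t := by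
      intro t; ring
    simp only [harg]
    have hcd : ContDiff ℝ (⊤ : ℕ∞) (fun t : ℝ => psir f (xs + t) (-2 * t)) := by
      have := (psir_contDiff f).comp
        (((contDiff_const.add contDiff_id).prodMk (contDiff_const.mul contDiff_id)) :
          ContDiff ℝ (⊤ : ℕ∞) fun t : ℝ => (xs + t, -2 * t))
      simpa [Function.uncurry, Function.comp_def] using this
    set g := fun t : ℝ => psir f (xs + t) (-2 * t) with hg
    have hD : HasDerivAt g (deriv g 0) 0 :=
      ((hcd.differentiable (by simp)) 0).hasDerivAt
    have heven : ∀ t, g (-t) = g t := by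
      intro t
      have h := psir_symm f (xs + -t) (-2 * -t)
      rw [show (xs + -t) + -(2:ℝ) * -t = xs + t by ring,
        show -(-(2:ℝ) * -t) = -2 * t by ring] at h
      exact h
    have hneg : HasDerivAt (fun t => g (-t)) (deriv g 0 * -1) 0 := by
      have h0 : HasDerivAt g (deriv g 0) (-(0:ℝ)) := by simpa using hD
      have := h0.comp 0 (hasDerivAt_neg (0:ℝ))
      simpa [Function.comp_def] using this
    rw [funext heven] at hneg
    have hzero : deriv g 0 = 0 := by
      have := hD.unique hneg
      linarith
    rw [hzero] at hD
    exact hD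
  · -- nonzero transversal slope
    set q := fun y : ℝ => psir f xs y with hqdef
    have hqC : ContDiff ℝ (⊤ : ℕ∞) q := psir_cd_left f xs
    obtain ⟨hqd, hq'C⟩ := contDiff_infty_iff_deriv.mp (hqC.of_le (mod_cast le_top))
    have hq'd : Differentiable ℝ (deriv q) := hq'C.differentiable (by simp)
    have hL : ∀ y : ℝ, q y + y * deriv q y = -(f.derivative.eval (xs + y)) := by
      intro y
      have hA : HasDerivAt (fun z => z * q z) (1 * q y + y * deriv q y) y :=
        (hasDerivAt_id y).mul (hqd y).hasDerivAt
      have hB : HasDerivAt (fun z => f.eval xs - f.eval (xs + z))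
          (-(f.derivative.eval (xs + y))) y := by
        have hadd : HasDerivAt (fun z : ℝ => xs + z) 1 y := by
          simpa using (hasDerivAt_id' y).const_add xs
        have hf := (f.hasDerivAt (xs + y)).comp y hadd
        simpa [Function.comp] using (hf.const_sub (f.eval xs))
      have heq : (fun z => f.eval xs - f.eval (xs + z)) = fun z => z * q z := by
        funext z; exact neg_injective (psir_key f xs z)
      rw [heq] at hB
      have := hA.unique hB
      linarith
    have h3 : HasDerivAt (fun y : ℝ => q y + y * deriv q y)
        (deriv q 0 + (1 * deriv q 0 + 0 * deriv (deriv q) 0)) 0 :=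
      (hqd 0).hasDerivAt.add ((hasDerivAt_id 0).mul (hq'd 0).hasDerivAt)
    have h4 : HasDerivAt (fun y : ℝ => -(f.derivative.eval (xs + y)))
        (-(f.derivative.derivative.eval xs)) 0 := by
      have hadd : HasDerivAt (fun z : ℝ => xs + z) 1 0 := by
        simpa using (hasDerivAt_id' (0:ℝ)).const_add xs
      have hf := (f.derivative.hasDerivAt (xs + 0)).comp 0 hadd
      simpa [Function.comp_def, Pi.neg_def] using hf.neg
    rw [funext hL] at h3
    have h5 := h3.unique h4
    refine ⟨deriv q 0, ?_, ?_⟩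
    · intro h0
      rw [h0] at h5
      simp at h5
      exact h2 h5
    · have hq0 : HasDerivAt q (deriv q 0) ((n : ℝ) * xs - (n : ℝ) * xs) := by
        have he : (n : ℝ) * xs - (n : ℝ) * xs = 0 := by ring
        rw [he]
        exact (hqd 0).hasDerivAt
      have hin : HasDerivAt (fun k : ℝ => k - (n : ℝ) * xs) 1 ((n : ℝ) * xs) := by
        simpa using (hasDerivAt_id ((n:ℝ)*xs)).sub_const ((n : ℝ) * xs)
      have hc := HasDerivAt.comp (h₂ := q) (h := fun k : ℝ => k - (n : ℝ) * xs)
        ((n : ℝ) * xs) hq0 hin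
      simpa [Function.comp_def] using hc
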